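/- arXiv:1911.00113 — 5 statements merged into one kernel-verified Lean document; each statement's English description precedes it below -/
import Mathlib

section
/- Let A₁ → A₂ → A₃ → ⋯ be a sequence of ring homomorphisms such that the induced maps Aₙ/pAₙ → Aₙ₊₁/pAₙ₊₁ are all injective, and each Aₙ is p-torsion free, p-adically separated, and totally integrally closed in Aₙ[1/p]. Then the direct limit A = colim Aₙ is p-torsion free and totally integrally closed in A[1/p]. -/
/-!
For a `p`-torsion free ring `R`, total integral closedness in `R[1/p]` is the purely
divisibility-theoretic statement that `p ^ (k * n) ∣ p ^ N * a ^ n` for all `n` forces `p ^ k ∣ a`.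
In the direct limit, `p ^ j`-divisibility of the image of `t ∈ Aₘ` already holds at some finite
stage, and injectivity mod `p` together with `p`-torsion freeness pulls it back to `t` itself.
So both properties descend from the `Aₙ` to the colimit.
-/

/-- `A` is totally integrally closed in `A[1/p]`: any element of `Localization.Away p`
whose powers all lie in a finitely generated `A`-submodule (equivalently in `p^{-N}·A`
for some `N`) comes from `A`. -/
def TotallyIntegrallyClosedAwayP (p : ℕ) (A : Type*) [CommRing A] : Prop :=
  ∀ α : Localization.Away (p : A),
    (∃ N : ℕ, ∀ n : ℕ, ∃ a : A,
      algebraMap A (Localization.Away (p : A)) ((p : A) ^ N) * α ^ n =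
        algebraMap A (Localization.Away (p : A)) a) →
    ∃ a : A, algebraMap A (Localization.Away (p : A)) a = α

/-- Iterated transition maps of a sequence of ring homomorphisms. -/
def iterTrans {A : ℕ → Type*} [∀ n, CommRing (A n)] (f : ∀ n, A n →+* A (n + 1)) :
    ∀ n m, A n →+* A (n + m)
  | _, 0 => RingHom.id _
  | n, m + 1 => (f (n + m)).comp (iterTrans f n m)

open nonZeroDivisors

section Localization

variable {R S : Type*} [CommRing R] [CommRing S] [Algebra R S] {x : R} [IsLocalization.Away x S]

theorem IsLocalization.Away.algebraMap_pow_mul_pow_eq_iff (hx : x ∈ R⁰) {α : S} {a : R}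
    {k : ℕ} (hα : α * algebraMap R S x ^ k = algebraMap R S a) (N n : ℕ) (b : R) :
    algebraMap R S (x ^ N) * α ^ n = algebraMap R S b ↔ x ^ N * a ^ n = x ^ (k * n) * b := by
  have hinj := IsLocalization.injective S (Submonoid.powers_le.2 hx)
  calc algebraMap R S (x ^ N) * α ^ n = algebraMap R S b
      ↔ algebraMap R S x ^ (k * n) * (algebraMap R S (x ^ N) * α ^ n) =
          algebraMap R S x ^ (k * n) * algebraMap R S b :=
        ((IsLocalization.Away.algebraMap_pow_isUnit x (k * n)).mul_right_inj).symm
    _ ↔ algebraMap R S (x ^ N * a ^ n) = algebraMap R S (x ^ (k * n) * b) := by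
        rw [map_mul, map_mul, map_pow, map_pow, map_pow, ← hα]
        ring_nf
    _ ↔ x ^ N * a ^ n = x ^ (k * n) * b := hinj.eq_iff

end Localization

open IsLocalization in
theorem totallyIntegrallyClosedAwayP_iff {p : ℕ} {R : Type*} [CommRing R] (hp : (p : R) ∈ R⁰) :
    TotallyIntegrallyClosedAwayP p R ↔
      ∀ (a : R) (k N : ℕ), (∀ n, (p : R) ^ (k * n) ∣ (p : R) ^ N * a ^ n) → (p : R) ^ k ∣ a := by
  set S := Localization.Away (p : R)
  constructor
  · intro h a k N hdiv
    obtain ⟨α, hα⟩ : ∃ α : S, α * algebraMap R S (p : R) ^ k = algebraMap R S a :=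
      ⟨mk' S a (⟨(p : R) ^ k, k, rfl⟩ : Submonoid.powers (p : R)), by
        rw [← map_pow]; exact mk'_spec S a _⟩
    obtain ⟨c, hc⟩ := h α
      ⟨N, fun n ↦ (hdiv n).imp fun b ↦ (Away.algebraMap_pow_mul_pow_eq_iff hp hα N n b).2⟩
    refine ⟨c, IsLocalization.injective S (Submonoid.powers_le.2 hp) ?_⟩
    rw [map_mul, map_pow, hc, mul_comm, hα]
  · rintro h α ⟨N, hN⟩
    obtain ⟨k, a, hα⟩ := Away.surj (p : R) α
    obtain ⟨c, rfl⟩ := h a k N fun n ↦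
      (hN n).imp fun b ↦ (Away.algebraMap_pow_mul_pow_eq_iff hp hα N n b).1
    refine ⟨c, (Away.algebraMap_pow_isUnit (p : R) k).mul_left_cancel ?_⟩
    rw [← map_pow, ← map_mul, ← hα, map_pow, mul_comm]

theorem RingHom.pow_dvd_of_pow_dvd_map {R S : Type*} [CommRing R] [CommRing S] (φ : R →+* S)
    {p : ℕ} (hS : (p : S) ∈ S⁰) (hφ : ∀ a, (p : S) ∣ φ a → (p : R) ∣ a) (j : ℕ) {a : R}
    (h : (p : S) ^ j ∣ φ a) : (p : R) ^ j ∣ a := by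
  induction j generalizing a with
  | zero => simp
  | succ j ih =>
    obtain ⟨a, rfl⟩ := hφ _ ((dvd_pow_self _ j.succ_ne_zero).trans h)
    rw [map_mul, map_natCast, pow_succ', dvd_cancel_left_mem_nonZeroDivisors hS] at h
    rw [pow_succ']
    exact mul_dvd_mul_left _ (ih h)

section DirectLimit

variable {A : ℕ → Type*} [∀ n, CommRing (A n)] {f : ∀ n, A n →+* A (n + 1)}
  {L : Type*} [CommRing L] {g : ∀ n, A n →+* L} {p : ℕ}

theorem pow_dvd_of_pow_dvd_iterTrans (hA : ∀ n, (p : A n) ∈ (A n)⁰)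
    (hmodinj : ∀ n (a : A n), (p : A (n + 1)) ∣ f n a → (p : A n) ∣ a) (n m j : ℕ) {a : A n}
    (h : (p : A (n + m)) ^ j ∣ iterTrans f n m a) : (p : A n) ^ j ∣ a := by
  induction m with
  | zero => exact h
  | succ m ih => exact ih ((f (n + m)).pow_dvd_of_pow_dvd_map (hA _) (hmodinj _) j h)

variable (hcomp : ∀ n, (g (n + 1)).comp (f n) = g n)
include hcomp

theorem map_iterTrans (n m : ℕ) (a : A n) : g (n + m) (iterTrans f n m a) = g n a := by
  induction m with
  | zero => rfl
  | succ m ih => exact (RingHom.congr_fun (hcomp (n + m)) _).trans ih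

theorem exists_map_eq_of_le {s n : ℕ} (h : s ≤ n) (u : A s) : ∃ v : A n, g n v = g s u := by
  obtain ⟨d, rfl⟩ := Nat.exists_eq_add_of_le h
  exact ⟨iterTrans f s d u, map_iterTrans hcomp s d u⟩

variable (hsurj : ∀ x : L, ∃ n a, g n a = x)
  (hker : ∀ n (a : A n), g n a = 0 → ∃ m, iterTrans f n m a = 0)
include hsurj hker

theorem natCast_mem_nonZeroDivisors_of_colimit (hA : ∀ n, (p : A n) ∈ (A n)⁰) : (p : L) ∈ L⁰ := by
  refine mem_nonZeroDivisors_iff_left.2 fun x hx ↦ ?_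
  obtain ⟨n, a, rfl⟩ := hsurj x
  obtain ⟨m, hm⟩ := hker n (p * a) (by rwa [map_mul, map_natCast])
  rw [map_mul, map_natCast] at hm
  rw [← map_iterTrans hcomp n m a, mem_nonZeroDivisors_iff_left.1 (hA _) _ hm, map_zero]

theorem pow_dvd_of_pow_dvd_map_colimit (hA : ∀ n, (p : A n) ∈ (A n)⁰)
    (hmodinj : ∀ n (a : A n), (p : A (n + 1)) ∣ f n a → (p : A n) ∣ a) {m j : ℕ} {t : A m}
    (h : (p : L) ^ j ∣ g m t) : (p : A m) ^ j ∣ t := by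
  obtain ⟨x, hx⟩ := h
  obtain ⟨s, u, rfl⟩ := hsurj x
  obtain ⟨v, hv⟩ := exists_map_eq_of_le hcomp (Nat.le_add_left s m) u
  obtain ⟨m', hm'⟩ := hker (m + s) (iterTrans f m s t - p ^ j * v) (by
    rw [map_sub, map_mul, map_pow, map_natCast, map_iterTrans hcomp, hv, hx, sub_self])
  rw [map_sub, map_mul, map_pow, map_natCast, sub_eq_zero] at hm'
  exact pow_dvd_of_pow_dvd_iterTrans hA hmodinj m s j
    (pow_dvd_of_pow_dvd_iterTrans hA hmodinj (m + s) m' j ⟨_, hm'⟩)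

end DirectLimit

theorem stmt_2_general {A : ℕ → Type*} [∀ n, CommRing (A n)] (p : ℕ)
    (f : ∀ n, A n →+* A (n + 1))
    (hmodinj : ∀ n (a : A n), (∃ c, f n a = (p : A (n + 1)) * c) →
      ∃ c, a = (p : A n) * c)
    (htf : ∀ n (a : A n), (p : A n) * a = 0 → a = 0)
    (htic : ∀ n, TotallyIntegrallyClosedAwayP p (A n))
    (L : Type*) [CommRing L] (g : ∀ n, A n →+* L)
    (hcomp : ∀ n, (g (n + 1)).comp (f n) = g n)
    (hsurj : ∀ x : L, ∃ n a, g n a = x)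
    (hker : ∀ n (a : A n), g n a = 0 → ∃ m, iterTrans f n m a = 0) :
    (∀ x : L, (p : L) * x = 0 → x = 0) ∧ TotallyIntegrallyClosedAwayP p L := by
  have hA : ∀ n, (p : A n) ∈ (A n)⁰ := fun n ↦ mem_nonZeroDivisors_iff_left.2 (htf n)
  have hL := natCast_mem_nonZeroDivisors_of_colimit hcomp hsurj hker hA
  refine ⟨mem_nonZeroDivisors_iff_left.1 hL, (totallyIntegrallyClosedAwayP_iff hL).2 ?_⟩
  intro a k N hdiv
  obtain ⟨m, a, rfl⟩ := hsurj a
  have hdiv' (n : ℕ) : (p : A m) ^ (k * n) ∣ (p : A m) ^ N * a ^ n :=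
    pow_dvd_of_pow_dvd_map_colimit hcomp hsurj hker hA hmodinj (by simpa using hdiv n)
  simpa using map_dvd (g m) ((totallyIntegrallyClosedAwayP_iff (hA m)).1 (htic m) a k N hdiv')

/-- a direct limit of p-torsion free, p-adically separated rings, each
totally integrally closed in its `p`-localization, along maps which are injective
mod `p`, is again p-torsion free and totally integrally closed in its
`p`-localization. The colimit is axiomatized by a cocone `g : ∀ n, A n →+* L`
which is compatible, jointly surjective, and with the expected kernels. -/
theorem stmt_2 {A : ℕ → Type*} [∀ n, CommRing (A n)] (p : ℕ) (hp : p.Prime)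
    (f : ∀ n, A n →+* A (n + 1))
    (hmodinj : ∀ n (a : A n), (∃ c, f n a = (p : A (n + 1)) * c) →
      ∃ c, a = (p : A n) * c)
    (htf : ∀ n (a : A n), (p : A n) * a = 0 → a = 0)
    (hsep : ∀ n (a : A n), (∀ k : ℕ, ∃ c, a = (p : A n) ^ k * c) → a = 0)
    (htic : ∀ n, TotallyIntegrallyClosedAwayP p (A n))
    (L : Type*) [CommRing L] (g : ∀ n, A n →+* L)
    (hcomp : ∀ n, (g (n + 1)).comp (f n) = g n)
    (hsurj : ∀ x : L, ∃ n a, g n a = x)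
    (hker : ∀ n (a : A n), g n a = 0 → ∃ m, iterTrans f n m a = 0) :
    (∀ x : L, (p : L) * x = 0 → x = 0) ∧ TotallyIntegrallyClosedAwayP p L :=
  stmt_2_general p f hmodinj htf htic L g hcomp hsurj hker
end

section
/- Let A be an R-algebra that is p-torsion free and p-adically separated, with A/pA reduced. Let Aₘ = A ⊗_R R[p^{1/pᵐ}], where R[p^{1/pᵐ}] ≅ R[z]/(z^{pᵐ} − p). Then Aₘ is p-torsion free, p-adically separated, and totally integrally closed in Aₘ[1/p]. -/
open Polynomial nonZeroDivisors

theorem Module.Basis.eq_zero_of_forall_eq_pow_smul {ι A M : Type*} [CommRing A]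
    [AddCommGroup M] [Module A M] (b : Basis ι A M) {c : A}
    (hsep : ∀ a : A, (∀ n : ℕ, ∃ d : A, a = c ^ n * d) → a = 0) {x : M}
    (hx : ∀ n : ℕ, ∃ y : M, x = c ^ n • y) : x = 0 :=
  b.forall_coord_eq_zero_iff.mp fun i ↦ hsep _ fun n ↦
    let ⟨y, hy⟩ := hx n
    ⟨b.coord i y, by rw [hy, map_smul, smul_eq_mul]⟩

theorem Module.Flat.algebraMap_mem_nonZeroDivisors {A B : Type*} [CommRing A] [CommRing B]
    [Algebra A B] [Module.Flat A B] {c : A} (hc : c ∈ A⁰) : algebraMap A B c ∈ B⁰ :=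
  mem_nonZeroDivisors_iff_left.mpr fun _ hx ↦
    (isSMulRegular_of_nonZeroDivisors hc).right_eq_zero_of_smul (by rwa [Algebra.smul_def])

section AdjoinRootXPowSubC

variable {A : Type*} [CommRing A] {q : ℕ} {c : A}

theorem AdjoinRoot.root_X_pow_sub_C_pow (q : ℕ) (c : A) :
    AdjoinRoot.root (X ^ q - C c) ^ q = AdjoinRoot.of _ c := by
  rw [← sub_eq_zero, ← AdjoinRoot.eval₂_root, eval₂_sub, eval₂_C, eval₂_pow, eval₂_X]

theorem AdjoinRoot.root_dvd_mk_of_coeff_zero_mem (hq : 0 < q) {g : A[X]}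
    (hg : g.coeff 0 ∈ Ideal.span {c}) :
    AdjoinRoot.root (X ^ q - C c) ∣ AdjoinRoot.mk _ g := by
  obtain ⟨d, hd⟩ := Ideal.mem_span_singleton'.mp hg
  rw [← X_mul_divX_add g, ← hd, map_add, map_mul, AdjoinRoot.mk_X, AdjoinRoot.mk_C, map_mul,
    ← AdjoinRoot.root_X_pow_sub_C_pow]
  exact (dvd_mul_right _ _).add ((dvd_pow_self _ hq.ne').mul_left _)

/-- `A[X]/(X^q - c)` modulo its root is `A/c`. -/
theorem AdjoinRoot.isRadical_root_X_pow_sub_C (hq : 0 < q) [IsReduced (A ⧸ Ideal.span {c})] :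
    IsRadical (AdjoinRoot.root (X ^ q - C c)) := by
  have hc : eval₂ (Ideal.Quotient.mk (Ideal.span {c})) 0 (X ^ q - C c) = 0 := by
    simp [zero_pow hq.ne']
  let φ := AdjoinRoot.lift _ _ hc
  intro n x ⟨y, hy⟩
  obtain ⟨g, rfl⟩ := AdjoinRoot.mk_surjective x
  refine AdjoinRoot.root_dvd_mk_of_coeff_zero_mem hq (Ideal.Quotient.eq_zero_iff_mem.mp ?_)
  have hφ : φ (AdjoinRoot.mk _ g) = Ideal.Quotient.mk _ (g.coeff 0) := by
    rw [AdjoinRoot.lift_mk, eval₂_at_zero]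
  rw [← hφ]
  exact IsReduced.eq_zero _ ⟨n, by rw [← map_pow, hy, map_mul, AdjoinRoot.lift_root, zero_mul]⟩

end AdjoinRootXPowSubC

section TotallyIntegrallyClosed

variable {B : Type*} [CommRing B] {p q : ℕ} {z : B}

local notation "ι" => algebraMap B (Localization.Away (p : B))

theorem exists_algebraMap_eq_pow_mul_of_pow_succ_mul (hq : 0 < q) (hz : z ^ q = p)
    (hp : (p : B) ∈ B⁰) (hrad : IsRadical z) {α : Localization.Away (p : B)} {N : ℕ}
    (hN : ∀ n : ℕ, ∃ a : B, ι ((p : B) ^ N) * α ^ n = ι a) {j : ℕ} {a : B}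
    (ha : ι z ^ (j + 1) * α = ι a) : ∃ a' : B, ι z ^ j * α = ι a' := by
  have hinj : Function.Injective ι :=
    IsLocalization.injective _ (Submonoid.powers_le.mpr hp)
  have hunit : IsUnit (ι z) := by
    rw [← isUnit_pow_iff hq.ne', ← map_pow, hz]
    exact IsLocalization.Away.algebraMap_isUnit _
  have hpN : ι z ^ (q * N) = ι ((p : B) ^ N) := by rw [pow_mul, ← map_pow, hz, map_pow]
  obtain ⟨b, hb⟩ := hN (q * N + 1)
  have hpow : a ^ (q * N + 1) = z * (z ^ (j * (q * N + 1)) * b) := by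
    refine hinj ?_
    rw [map_pow, ← ha, map_mul, map_mul, map_pow, ← hb, ← hpN]
    ring
  obtain ⟨a', rfl⟩ := hrad _ _ ⟨_, hpow⟩
  refine ⟨a', hunit.mul_left_cancel ?_⟩
  rw [map_mul] at ha
  rw [← ha]
  ring

theorem totallyIntegrallyClosedAwayP_of_pow_eq (hq : 0 < q) (hz : z ^ q = p)
    (hp : (p : B) ∈ B⁰) (hrad : IsRadical z) : TotallyIntegrallyClosedAwayP p B := by
  rintro α ⟨N, hN⟩
  have descend : ∀ j : ℕ, (∃ a : B, ι z ^ j * α = ι a) → ∃ a : B, ι a = α := by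
    intro j
    induction j with
    | zero => rintro ⟨a, ha⟩; exact ⟨a, by simpa using ha.symm⟩
    | succ j ih =>
      rintro ⟨a, ha⟩
      exact ih (exists_algebraMap_eq_pow_mul_of_pow_succ_mul hq hz hp hrad hN ha)
  obtain ⟨k, b, hb⟩ := IsLocalization.Away.surj (p : B) α
  exact descend (q * k) ⟨b, by rw [pow_mul, ← map_pow, hz, mul_comm, hb]⟩

end TotallyIntegrallyClosed

theorem stmt_4_general (p : ℕ) (hp : p.Prime)
    (A : Type*) [CommRing A]
    (htf : ∀ a : A, (p : A) * a = 0 → a = 0)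
    (hsep : ∀ a : A, (∀ n : ℕ, ∃ c : A, a = (p : A) ^ n * c) → a = 0)
    (hred : IsReduced (A ⧸ Ideal.span {(p : A)}))
    (m : ℕ) :
    let Am := AdjoinRoot ((Polynomial.X : Polynomial A) ^ p ^ m - Polynomial.C (p : A))
    (∀ a : Am, (p : Am) * a = 0 → a = 0) ∧
    (∀ a : Am, (∀ n : ℕ, ∃ c : Am, a = (p : Am) ^ n * c) → a = 0) ∧
    TotallyIntegrallyClosedAwayP p Am := by
  intro Am
  have hq : 0 < p ^ m := pow_pos hp.pos m
  have hmonic : (X ^ p ^ m - C (p : A)).Monic := monic_X_pow_sub_C _ hq.ne'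
  have := hmonic.free_adjoinRoot
  have hpAm : (p : Am) ∈ Am⁰ := by
    have hpA : (p : A) ∈ A⁰ := mem_nonZeroDivisors_iff_left.mpr htf
    have := Module.Flat.algebraMap_mem_nonZeroDivisors (B := Am) hpA
    rwa [map_natCast (algebraMap A Am) p] at this
  have hz : AdjoinRoot.root _ ^ p ^ m = (p : Am) := by
    rw [AdjoinRoot.root_X_pow_sub_C_pow, map_natCast]
  refine ⟨mem_nonZeroDivisors_iff_left.mp hpAm, fun a ha ↦ ?_,
    totallyIntegrallyClosedAwayP_of_pow_eq hq hz hpAm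
      (AdjoinRoot.isRadical_root_X_pow_sub_C hq)⟩
  refine (AdjoinRoot.powerBasis' hmonic).basis.eq_zero_of_forall_eq_pow_smul hsep fun n ↦ ?_
  obtain ⟨c, hc⟩ := ha n
  exact ⟨c, by rw [hc, Algebra.smul_def, map_pow, map_natCast (algebraMap A Am) p]⟩

/-- Let `R` be a complete DVR with maximal ideal `(p)`, `p` an odd prime,
and algebraically closed residue field. Let `A` be an `R`-algebra which is p-torsion
free and p-adically separated with `A/pA` reduced. Then
`A_m = A ⊗_R R[p^{1/p^m}] ≅ A[z]/(z^{p^m} - p)` is p-torsion free, p-adically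
separated, and totally integrally closed in `A_m[1/p]`. -/
theorem stmt_4 (p : ℕ) (hp : p.Prime) (hodd : p ≠ 2)
    (R : Type*) [CommRing R] [IsDomain R] [IsDiscreteValuationRing R]
    (hirr : Irreducible (p : R)) (hcompl : IsAdicComplete (Ideal.span {(p : R)}) R)
    [IsAlgClosed (IsLocalRing.ResidueField R)]
    (A : Type*) [CommRing A] [Algebra R A]
    (htf : ∀ a : A, (p : A) * a = 0 → a = 0)
    (hsep : ∀ a : A, (∀ n : ℕ, ∃ c : A, a = (p : A) ^ n * c) → a = 0)
    (hred : IsReduced (A ⧸ Ideal.span {(p : A)}))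
    (m : ℕ) :
    let Am := AdjoinRoot ((Polynomial.X : Polynomial A) ^ p ^ m - Polynomial.C (p : A))
    (∀ a : Am, (p : Am) * a = 0 → a = 0) ∧
    (∀ a : Am, (∀ n : ℕ, ∃ c : Am, a = (p : Am) ^ n * c) → a = 0) ∧
    TotallyIntegrallyClosedAwayP p Am :=
  stmt_4_general p hp A htf hsep hred m
end

section
/- Let A be a p-torsion free p-adically separated ring with A/pA reduced, and let πₘ = p^{1/pᵐ} in Aₘ = A[z]/(z^{pᵐ} − p) (z ↦ πₘ). If α ∈ Aₘ[1/p] satisfies αⁿ ∈ (1/p^N)·Aₘ for all n ∈ ℕ and some fixed N, and α = a/πₘ^ν with a ∈ Aₘ ∖ πₘAₘ and ν ≥ 1, then a ∈ πₘAₘ, a contradiction; hence ν = 0 and α ∈ Aₘ. -/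
/-!
In `A_m` the root `π` is a non-zero-divisor (because `p` is one in `A`) and `p = π ^ p^m`, so
`A_m` embeds into `A_m[1/p]`, while `z ↦ 0` induces `A_m / π A_m ≅ A / pA`. Clearing denominators
in `(π^ν α)^n = a^n` and `p^N α^n = b` with `n = p^m N + 1` gives `π^{p^m N} a^n = π^{νn} b` in
`A_m`, and since `νn > p^m N`, cancelling shows `π ∣ a^n`. As `A / pA` is reduced, `π ∣ a`.
-/

open Polynomial

/-- `A_m = A[z]/(z^{p^m} - p)`, the ring obtained by adjoining a `p^m`-th root of `p`. -/
abbrev AdjoinPthRootsOfP (p m : ℕ) (A : Type*) [CommRing A] : Type _ :=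
  AdjoinRoot ((Polynomial.X : Polynomial A) ^ p ^ m - Polynomial.C (p : A))

theorem dvd_of_pow_mul_eq_pow_mul {R : Type*} [CommMonoid R] {π y b : R} {j k : ℕ}
    (hπ : IsLeftRegular π) (hjk : j < k) (h : π ^ j * y = π ^ k * b) : π ∣ y := by
  have hy : y = π ^ (k - j) * b := by
    apply hπ.pow j
    show π ^ j * y = π ^ j * (π ^ (k - j) * b)
    rw [h, ← mul_assoc, ← pow_add, Nat.add_sub_cancel' hjk.le]
  exact hy ▸ (dvd_pow_self π (Nat.sub_ne_zero_of_lt hjk)).mul_right b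

theorem mul_pow_eq_pow_mul_of_algebraMap_eq {R S : Type*} [CommRing R] [CommRing S]
    [Algebra R S] (hinj : Function.Injective (algebraMap R S)) {α : S} {s a c b : R} {n : ℕ}
    (hrep : algebraMap R S s * α = algebraMap R S a)
    (hint : algebraMap R S c * α ^ n = algebraMap R S b) :
    c * a ^ n = s ^ n * b := by
  apply hinj
  rw [map_mul, map_mul, map_pow, map_pow, ← hrep, ← hint]
  ring

namespace AdjoinRoot

variable {A : Type*} [CommRing A] {t : A} {q : ℕ}

theorem root_X_pow_sub_C_pow_s5 (q : ℕ) (t : A) :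
    root (X ^ q - C t) ^ q = of (X ^ q - C t) t := by
  rw [← sub_eq_zero, ← eval₂_root, eval₂_sub, eval₂_C, eval₂_pow, eval₂_X]

theorem isLeftRegular_root_X_pow_sub_C (hq : 0 < q) (ht : IsLeftRegular t) :
    IsLeftRegular (root (X ^ q - C t)) := by
  refine isLeftRegular_iff_right_eq_zero_of_mul.mpr fun x hx ↦ ?_
  obtain ⟨g, rfl⟩ := mk_surjective x
  rw [← mk_X, ← map_mul, mk_eq_zero] at hx
  obtain ⟨h, hh⟩ := hx
  have hh0 : t * h.coeff 0 = 0 := by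
    simpa [coeff_X_pow, hq.ne, eq_comm] using congrArg (coeff · 0) hh
  obtain ⟨h', rfl⟩ := X_dvd_iff.mpr (isLeftRegular_iff_right_eq_zero_of_mul.mp ht _ hh0)
  refine mk_eq_zero.mpr ⟨h', isRegular_X.left ?_⟩
  simp only [hh]
  ring

theorem eval₂_X_pow_sub_C_quotient_mk_zero (hq : 0 < q) :
    (X ^ q - C t).eval₂ (Ideal.Quotient.mk (Ideal.span {t})) 0 = 0 := by
  rw [eval₂_sub, eval₂_pow, eval₂_X, eval₂_C, zero_pow hq.ne', zero_sub, neg_eq_zero,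
    Ideal.Quotient.eq_zero_iff_mem]
  exact Ideal.mem_span_singleton_self t

noncomputable def modRoot (hq : 0 < q) : AdjoinRoot (X ^ q - C t) →+* A ⧸ Ideal.span {t} :=
  lift (Ideal.Quotient.mk _) 0 (eval₂_X_pow_sub_C_quotient_mk_zero hq)

theorem modRoot_eq_zero_iff (hq : 0 < q) {x : AdjoinRoot (X ^ q - C t)} :
    modRoot hq x = 0 ↔ root _ ∣ x := by
  refine ⟨fun hx ↦ ?_, fun hx ↦ ?_⟩
  · obtain ⟨g, rfl⟩ := mk_surjective x
    rw [modRoot, lift_mk, eval₂_at_zero, Ideal.Quotient.eq_zero_iff_mem,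
      Ideal.mem_span_singleton] at hx
    obtain ⟨c, hc⟩ := hx
    obtain ⟨h, hh⟩ := X_dvd_iff.mpr (by simp : (g - C (g.coeff 0)).coeff 0 = 0)
    have hg : mk _ g = root _ * mk _ h + root (X ^ q - C t) ^ q * mk _ (C c) := by
      rw [root_X_pow_sub_C_pow_s5, of, RingHom.comp_apply, ← mk_X, ← map_mul, ← map_mul,
        ← map_add, ← hh, hc, C_mul, sub_add_cancel]
    rw [hg]
    exact dvd_add (dvd_mul_right _ _) ((dvd_pow_self _ hq.ne').mul_right _)
  · obtain ⟨c, rfl⟩ := hx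
    rw [map_mul, modRoot, lift_root, zero_mul]

end AdjoinRoot

theorem stmt_5_general (p : ℕ) (hp : p.Prime)
    (A : Type*) [CommRing A]
    (htf : ∀ a : A, (p : A) * a = 0 → a = 0)
    (hred : IsReduced (A ⧸ Ideal.span {(p : A)}))
    (m : ℕ)
    (α : Localization.Away ((p : AdjoinPthRootsOfP p m A))) (N : ℕ)
    (hint : ∀ n : ℕ, ∃ b : AdjoinPthRootsOfP p m A,
      algebraMap (AdjoinPthRootsOfP p m A) (Localization.Away ((p : AdjoinPthRootsOfP p m A)))
          ((p : AdjoinPthRootsOfP p m A) ^ N) * α ^ n =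
        algebraMap (AdjoinPthRootsOfP p m A) _ b)
    (a : AdjoinPthRootsOfP p m A) (ν : ℕ) (hν : 1 ≤ ν)
    (hrep : algebraMap (AdjoinPthRootsOfP p m A) (Localization.Away ((p : AdjoinPthRootsOfP p m A)))
        ((AdjoinRoot.root _) ^ ν) * α =
      algebraMap (AdjoinPthRootsOfP p m A) _ a)
    (ha : ¬ ∃ c : AdjoinPthRootsOfP p m A, a = AdjoinRoot.root _ * c) :
    False := by
  have hq : 0 < p ^ m := pow_pos hp.pos m
  have hπ : IsLeftRegular (AdjoinRoot.root (X ^ p ^ m - C (p : A))) :=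
    AdjoinRoot.isLeftRegular_root_X_pow_sub_C hq (isLeftRegular_iff_right_eq_zero_of_mul.mpr htf)
  have hp_eq : (p : AdjoinPthRootsOfP p m A) = AdjoinRoot.root _ ^ p ^ m :=
    (map_natCast (AdjoinRoot.of _) p).symm.trans (AdjoinRoot.root_X_pow_sub_C_pow_s5 _ _).symm
  have hinj : Function.Injective (algebraMap (AdjoinPthRootsOfP p m A)
      (Localization.Away (p : AdjoinPthRootsOfP p m A))) := by
    refine IsLocalization.injectiveₛ (M := Submonoid.powers (p : AdjoinPthRootsOfP p m A)) _ ?_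
    rintro _ ⟨k, rfl⟩
    exact isLeftRegular_iff_isRegular.mp ((hp_eq ▸ hπ.pow _).pow k)
  obtain ⟨b, hb⟩ := hint (p ^ m * N + 1)
  have key := mul_pow_eq_pow_mul_of_algebraMap_eq hinj hrep hb
  rw [hp_eq, ← pow_mul, ← pow_mul] at key
  have hlt : p ^ m * N < ν * (p ^ m * N + 1) :=
    (Nat.lt_succ_self _).trans_le (Nat.le_mul_of_pos_left _ hν)
  have hdvd : AdjoinRoot.root _ ∣ a ^ (p ^ m * N + 1) := dvd_of_pow_mul_eq_pow_mul hπ hlt key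
  have hnil : IsNilpotent (AdjoinRoot.modRoot hq a) :=
    ⟨_, by rw [← map_pow, AdjoinRoot.modRoot_eq_zero_iff]; exact hdvd⟩
  exact ha ((AdjoinRoot.modRoot_eq_zero_iff hq).mp (hred.eq_zero _ hnil))

/-- Let `A` be p-torsion free, p-adically separated, with `A/pA` reduced,
and let `π_m` be the class of `z` in `A_m = A[z]/(z^{p^m} - p)`. If `α ∈ A_m[1/p]`
satisfies `α^n ∈ p^{-N}·A_m` for all `n`, and `α = a/π_m^ν` with `a ∉ π_m A_m` and
`ν ≥ 1`, then we reach a contradiction (so in fact `ν = 0` and `α ∈ A_m`, i.e. `A_m`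
is totally integrally closed in `A_m[1/p]`). -/
theorem stmt_5 (p : ℕ) (hp : p.Prime) (hodd : p ≠ 2)
    (A : Type*) [CommRing A]
    (htf : ∀ a : A, (p : A) * a = 0 → a = 0)
    (hsep : ∀ a : A, (∀ n : ℕ, ∃ c : A, a = (p : A) ^ n * c) → a = 0)
    (hred : IsReduced (A ⧸ Ideal.span {(p : A)}))
    (m : ℕ)
    (α : Localization.Away ((p : AdjoinPthRootsOfP p m A))) (N : ℕ)
    (hint : ∀ n : ℕ, ∃ b : AdjoinPthRootsOfP p m A,
      algebraMap (AdjoinPthRootsOfP p m A) (Localization.Away ((p : AdjoinPthRootsOfP p m A)))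
          ((p : AdjoinPthRootsOfP p m A) ^ N) * α ^ n =
        algebraMap (AdjoinPthRootsOfP p m A) _ b)
    (a : AdjoinPthRootsOfP p m A) (ν : ℕ) (hν : 1 ≤ ν)
    (hrep : algebraMap (AdjoinPthRootsOfP p m A) (Localization.Away ((p : AdjoinPthRootsOfP p m A)))
        ((AdjoinRoot.root _) ^ ν) * α =
      algebraMap (AdjoinPthRootsOfP p m A) _ a)
    (ha : ¬ ∃ c : AdjoinPthRootsOfP p m A, a = AdjoinRoot.root _ * c) :
    False :=
  stmt_5_general p hp A htf hred m α N hint a ν hν hrep ha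
end

section
/- Let R be a p-adically complete discrete valuation ring with uniformizer p and let C be a p-adically complete p-torsion-free R-algebra with a Frobenius lift φ (a ring endomorphism with φ(x) ≡ xᵖ mod pC). Suppose (aₙ)_{n∈ℤ} is a sequence in R with aₙ → 0 p-adically as n → ±∞, and suppose in the ring obtained from C by inverting φ one has the identity (φ − p)(Σₙ aₙ φ^{−n}(z)) = p·z, where z is a fixed element whose φ-orbit is free. Then aₙ = pⁿ for n ≥ 1 and aₙ = 0 for n ≤ 0. -/
/-!
Write `S = ∑ aₙ eₙ` with `eₙ = φ^{-n}(z)`. Since `Φ` is `φ`-semilinear and shifts `eₙ` to `eₙ₋₁`,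
`(Φ - p) S - p e₀` is the series with coefficients `φ(aₙ₊₁) - p aₙ - [n = 0] p`, and the
decay of `(aₙ)` makes its partial sums converge `p`-adically to `0`; freeness of the orbit
kills all these coefficients. The resulting recursion `φ(aₙ₊₁) = p aₙ` (for `n ≠ 0`) shows
that `aₙ` is divisible by every power of `p` for `n ≤ 0`, hence zero, and then
`φ(a₁) = p` and `φ(aₙ₊₁) = p aₙ` force `aₙ = pⁿ` for `n ≥ 1`.
-/

open Finset

theorem Finset.sum_Icc_sub_sum_Icc_sub_one {G : Type*} [AddCommGroup G] (g : ℤ → G) {a b : ℤ}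
    (hab : a ≤ b + 1) :
    ∑ n ∈ Icc a b, g n - ∑ n ∈ Icc (a - 1) (b - 1), g n = g b - g (a - 1) := by
  have hleft : insert (a - 1) (Icc a b) = Icc (a - 1) b := by
    simpa using insert_Icc_add_one_left_eq_Icc (a := a - 1) (b := b) (by omega)
  have hright : insert b (Icc (a - 1) (b - 1)) = Icc (a - 1) b := by
    simpa using insert_Icc_right_eq_Icc_add_one (a := a - 1) (b := b - 1) (by omega)
  have key := congrArg (∑ n ∈ ·, g n) (hleft.trans hright.symm)
  rw [sum_insert (by simp), sum_insert (by simp)] at key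
  rw [sub_eq_sub_iff_add_eq_add, add_comm, key, add_comm]

theorem Finset.sum_Icc_comp_add_one {M : Type*} [AddCommMonoid M] (f : ℤ → M) (a b : ℤ) :
    ∑ n ∈ Icc (a - 1) (b - 1), f (n + 1) = ∑ n ∈ Icc a b, f n := by
  conv_rhs => rw [← sub_add_cancel a 1, ← sub_add_cancel b 1, ← map_add_right_Icc, sum_map]
  rfl

section Recurrence

variable {R : Type*} [CommRing R] {φ : R ≃+* R} {π : R}

theorem eq_zero_of_forall_pow_dvd (h : IsHausdorff (Ideal.span {π}) R) {x : R}
    (hx : ∀ k : ℕ, π ^ k ∣ x) : x = 0 :=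
  h.haus x fun k => by
    rw [SModEq.zero, smul_eq_mul, Ideal.mul_top, Ideal.span_singleton_pow,
      Ideal.mem_span_singleton]
    exact hx k

theorem pow_dvd_map_iff (hπ : φ π = π) {k : ℕ} {x : R} : π ^ k ∣ φ x ↔ π ^ k ∣ x := by
  simpa [hπ] using map_dvd_iff φ (a := π ^ k) (b := x)

theorem pow_dvd_of_map_succ_eq_mul (hπ : φ π = π) {a : ℤ → R}
    (h : ∀ n < 0, φ (a (n + 1)) = π * a n) (k : ℕ) : ∀ m ≤ 0, π ^ k ∣ a m := by
  induction k with
  | zero => simp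
  | succ k ih =>
    intro m hm
    have hφa : φ (a m) = π * a (m - 1) := by simpa using h (m - 1) (by omega)
    rw [← pow_dvd_map_iff hπ, hφa, pow_succ']
    exact mul_dvd_mul_left π (ih (m - 1) (by omega))

theorem eq_pow_of_map_succ_eq (hπ : φ π = π) (hR : IsHausdorff (Ideal.span {π}) R) {a : ℤ → R}
    (h : ∀ n, φ (a (n + 1)) = π * a n + if n = 0 then π else 0) :
    (∀ n : ℤ, 1 ≤ n → a n = π ^ n.toNat) ∧ (∀ n : ℤ, n ≤ 0 → a n = 0) := by
  have hneg : ∀ n ≤ 0, a n = 0 := fun n hn =>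
    eq_zero_of_forall_pow_dvd hR fun k =>
      pow_dvd_of_map_succ_eq_mul hπ (fun n hn => by simpa [hn.ne] using h n) k n hn
  refine ⟨fun n hn => ?_, hneg⟩
  induction n, hn using Int.leInduction with
  | base => exact φ.injective (by simpa [hneg 0 le_rfl, hπ] using h 0)
  | succ n hn ih =>
    apply φ.injective
    rw [h, if_neg (by omega), ih, add_zero, map_pow, hπ, show (n + 1).toNat = n.toNat + 1 by omega,
      pow_succ']

/-- The coefficient of `e n` in `(Φ - π) (∑ a n • e n) - π • e 0`. -/
def frobeniusDefect (φ : R ≃+* R) (π : R) (a : ℤ → R) (n : ℤ) : R :=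
  φ (a (n + 1)) - π * a n - if n = 0 then π else 0

theorem frobeniusDefect_pow_dvd (hπ : φ π = π) {a : ℤ → R}
    (ha : ∀ k : ℕ, ∃ N : ℕ, ∀ n : ℤ, (N : ℤ) ≤ |n| → π ^ k ∣ a n) (k : ℕ) :
    ∃ N : ℕ, ∀ n : ℤ, (N : ℤ) ≤ |n| → π ^ k ∣ frobeniusDefect φ π a n := by
  obtain ⟨N, hN⟩ := ha k
  refine ⟨N + 1, fun n hn => ?_⟩
  have hn0 : n ≠ 0 := by rintro rfl; simp at hn; omega
  have hsucc : π ^ k ∣ φ (a (n + 1)) := (pow_dvd_map_iff hπ).2 (hN _ (by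
    cases abs_cases n <;> cases abs_cases (n + 1) <;> omega))
  rw [frobeniusDefect, if_neg hn0, sub_zero]
  exact dvd_sub hsucc (dvd_mul_of_dvd_right (hN n (by omega)) π)

end Recurrence

section FrobeniusTwist

variable {R D : Type*} [CommRing R] [CommRing D] [Algebra R D] {φ : R ≃+* R} {Φ : D ≃+* D}
  {e : ℤ → D}

theorem map_sum_smul_shift (hΦR : ∀ r : R, Φ (algebraMap R D r) = algebraMap R D (φ r))
    (he : ∀ n : ℤ, Φ (e n) = e (n - 1)) (f : ℤ → R) (a b : ℤ) :
    Φ (∑ n ∈ Icc a b, f n • e n) = ∑ n ∈ Icc (a - 1) (b - 1), φ (f (n + 1)) • e n := by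
  rw [map_sum, ← sum_Icc_comp_add_one]
  refine sum_congr rfl fun n _ => ?_
  rw [Algebra.smul_def, map_mul, hΦR, he, add_sub_cancel_right, Algebra.smul_def]

theorem sum_frobeniusDefect_smul (hΦR : ∀ r : R, Φ (algebraMap R D r) = algebraMap R D (φ r))
    (he : ∀ n : ℤ, Φ (e n) = e (n - 1)) (π : R) (a : ℤ → R) (M : ℕ) :
    ∑ n ∈ Icc (-(M : ℤ)) M, frobeniusDefect φ π a n • e n =
      Φ (∑ n ∈ Icc (-(M : ℤ)) M, a n • e n) - π • ∑ n ∈ Icc (-(M : ℤ)) M, a n • e n - π • e 0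
        + (φ (a (M + 1)) • e M - φ (a (-M)) • e (-M - 1)) := by
  have hends := sum_Icc_sub_sum_Icc_sub_one (fun n => φ (a (n + 1)) • e n)
    (a := -(M : ℤ)) (b := M) (by omega)
  simp only [sub_add_cancel] at hends
  rw [map_sum_smul_shift hΦR he, ← hends, smul_sum]
  have h0 : (0 : ℤ) ∈ Icc (-(M : ℤ)) M := by simp
  simp only [frobeniusDefect, sub_smul, sum_sub_distrib, mul_smul, ite_smul, zero_smul,
    sum_ite_eq', if_pos h0]
  abel

theorem natCast_pow_dvd_smul {p k : ℕ} {r : R} (h : (p : R) ^ k ∣ r) (x : D) :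
    (p : D) ^ k ∣ r • x := by
  rw [Algebra.smul_def]
  exact dvd_mul_of_dvd_left (by simpa using map_dvd (algebraMap R D) h) x

theorem pow_dvd_sum_frobeniusDefect_smul
    (hΦR : ∀ r : R, Φ (algebraMap R D r) = algebraMap R D (φ r))
    (he : ∀ n : ℤ, Φ (e n) = e (n - 1)) {p : ℕ} {a : ℤ → R} {S : D}
    (ha : ∀ k : ℕ, ∃ N : ℕ, ∀ n : ℤ, (N : ℤ) ≤ |n| → (p : R) ^ k ∣ a n)
    (hS : ∀ k : ℕ, ∃ N : ℕ, ∀ M : ℕ, N ≤ M →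
      (p : D) ^ k ∣ S - ∑ n ∈ Icc (-(M : ℤ)) M, a n • e n)
    (heq : Φ S - p * S = p * e 0) (k : ℕ) :
    ∃ N : ℕ, ∀ M : ℕ, N ≤ M →
      (p : D) ^ k ∣ ∑ n ∈ Icc (-(M : ℤ)) M, frobeniusDefect φ p a n • e n := by
  obtain ⟨N₁, hN₁⟩ := hS k
  obtain ⟨N₂, hN₂⟩ := ha k
  refine ⟨max N₁ N₂, fun M hM => ?_⟩
  have hφp : φ (p : R) = p := map_natCast φ p
  set T := ∑ n ∈ Icc (-(M : ℤ)) M, a n • e n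
  have htail : (p : D) ^ k ∣ S - T := hN₁ M (le_of_max_le_left hM)
  have hright : (p : D) ^ k ∣ φ (a (M + 1)) • e M :=
    natCast_pow_dvd_smul ((pow_dvd_map_iff hφp).2 (hN₂ _ (by rw [abs_of_nonneg] <;> omega))) _
  have hleft : (p : D) ^ k ∣ φ (a (-M)) • e (-M - 1) :=
    natCast_pow_dvd_smul ((pow_dvd_map_iff hφp).2 (hN₂ _ (by rw [abs_neg, Nat.abs_cast]; omega))) _
  -- `heq` turns `Φ T - p T - p e 0` into `-(Φ - p) (S - T)` for the partial sum `T`.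
  have hsum : ∑ n ∈ Icc (-(M : ℤ)) M, frobeniusDefect φ p a n • e n =
      -(Φ (S - T) - p * (S - T)) + (φ (a (M + 1)) • e M - φ (a (-M)) • e (-M - 1)) := by
    rw [sum_frobeniusDefect_smul hΦR he, Nat.cast_smul_eq_nsmul, Nat.cast_smul_eq_nsmul,
      nsmul_eq_mul, nsmul_eq_mul, map_sub]
    linear_combination heq
  rw [hsum]
  refine dvd_add (dvd_neg.2 (dvd_sub ?_ (dvd_mul_of_dvd_right htail _))) (dvd_sub hright hleft)
  exact (pow_dvd_map_iff (map_natCast Φ p)).2 htail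

end FrobeniusTwist

theorem stmt_8_general (p : ℕ)
    (R : Type*) [CommRing R]
    (hRcompl : IsAdicComplete (Ideal.span {(p : R)}) R)
    (φ : R ≃+* R)
    (D : Type*) [CommRing D] [Algebra R D]
    (Φ : D ≃+* D)
    (hΦR : ∀ r : R, Φ (algebraMap R D r) = algebraMap R D (φ r))
    (e : ℤ → D) (he : ∀ n : ℤ, Φ (e n) = e (n - 1))
    (hfree : ∀ c : ℤ → R,
      (∀ k : ℕ, ∃ N : ℕ, ∀ n : ℤ, (N : ℤ) ≤ |n| → ∃ r : R, c n = (p : R) ^ k * r) →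
      (∀ k : ℕ, ∃ N : ℕ, ∀ M : ℕ, N ≤ M → ∃ d : D,
        ∑ n ∈ Finset.Icc (-(M : ℤ)) (M : ℤ), c n • e n = (p : D) ^ k * d) →
      ∀ n : ℤ, c n = 0)
    (a : ℤ → R)
    (hconv : ∀ k : ℕ, ∃ N : ℕ, ∀ n : ℤ, (N : ℤ) ≤ |n| → ∃ r : R, a n = (p : R) ^ k * r)
    (S : D)
    (hS : ∀ k : ℕ, ∃ N : ℕ, ∀ M : ℕ, N ≤ M → ∃ d : D,
      S - ∑ n ∈ Finset.Icc (-(M : ℤ)) (M : ℤ), a n • e n = (p : D) ^ k * d)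
    (heq : Φ S - (p : D) * S = (p : D) * e 0) :
    (∀ n : ℤ, 1 ≤ n → a n = (p : R) ^ n.toNat) ∧ (∀ n : ℤ, n ≤ 0 → a n = 0) := by
  have hφp : φ (p : R) = p := map_natCast φ p
  have hdefect := hfree (frobeniusDefect φ p a) (frobeniusDefect_pow_dvd hφp hconv)
    (pow_dvd_sum_frobeniusDefect_smul hΦR he hconv hS heq)
  refine eq_pow_of_map_succ_eq hφp hRcompl.toIsHausdorff fun n => ?_
  have hn := hdefect n
  rwa [frobeniusDefect, sub_sub, sub_eq_zero] at hn

/-- uniqueness of the cocharacter of `𝔾ₘ`.  `R` is a complete DVR with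
uniformizer `p` and Frobenius lift `φ`; `D` plays the role of the (p-adically
complete, p-torsion free) ring obtained from `C` by inverting the Frobenius lift,
with induced automorphism `Φ`; `e n` represents `φ^{-n}(z)` (so `Φ (e n) = e (n-1)`,
and `e 0 = z`), and the orbit `(e n)` is (topologically) free: if the partial sums
`∑_{|n| ≤ M} c n • e n` of a p-adically decaying family of coefficients tend to `0`
p-adically, then all `c n = 0`.  If `(aₙ)` is a sequence in `R` tending to `0`
p-adically as `n → ±∞` and `S = Σₙ aₙ φ^{-n}(z)` satisfies `(Φ - p) S = p z`, then
`aₙ = pⁿ` for `n ≥ 1` and `aₙ = 0` for `n ≤ 0`. -/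
theorem stmt_8 (p : ℕ) (hp : p.Prime)
    (R : Type*) [CommRing R] [IsDomain R] [IsDiscreteValuationRing R]
    (hirr : Irreducible (p : R)) (hRcompl : IsAdicComplete (Ideal.span {(p : R)}) R)
    (φ : R ≃+* R) (hφ : ∀ x : R, ∃ c : R, φ x = x ^ p + (p : R) * c)
    (D : Type*) [CommRing D] [Algebra R D]
    (hDtf : ∀ d : D, (p : D) * d = 0 → d = 0)
    (hDcompl : IsAdicComplete (Ideal.span {(p : D)}) D)
    (Φ : D ≃+* D)
    (hΦR : ∀ r : R, Φ (algebraMap R D r) = algebraMap R D (φ r))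
    (hΦfrob : ∀ x : D, ∃ c : D, Φ x = x ^ p + (p : D) * c)
    (e : ℤ → D) (he : ∀ n : ℤ, Φ (e n) = e (n - 1))
    (hfree : ∀ c : ℤ → R,
      (∀ k : ℕ, ∃ N : ℕ, ∀ n : ℤ, (N : ℤ) ≤ |n| → ∃ r : R, c n = (p : R) ^ k * r) →
      (∀ k : ℕ, ∃ N : ℕ, ∀ M : ℕ, N ≤ M → ∃ d : D,
        ∑ n ∈ Finset.Icc (-(M : ℤ)) (M : ℤ), c n • e n = (p : D) ^ k * d) →
      ∀ n : ℤ, c n = 0)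
    (a : ℤ → R)
    (hconv : ∀ k : ℕ, ∃ N : ℕ, ∀ n : ℤ, (N : ℤ) ≤ |n| → ∃ r : R, a n = (p : R) ^ k * r)
    (S : D)
    (hS : ∀ k : ℕ, ∃ N : ℕ, ∀ M : ℕ, N ≤ M → ∃ d : D,
      S - ∑ n ∈ Finset.Icc (-(M : ℤ)) (M : ℤ), a n • e n = (p : D) ^ k * d)
    (heq : Φ S - (p : D) * S = (p : D) * e 0) :
    (∀ n : ℤ, 1 ≤ n → a n = (p : R) ^ n.toNat) ∧ (∀ n : ℤ, n ≤ 0 → a n = 0) :=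
  stmt_8_general p R hRcompl φ D Φ hΦR e he hfree a hconv S hS heq
end

section
/- Let R be a complete discrete valuation ring with maximal ideal (p) and algebraically closed residue field, with its unique Frobenius lift φ (an automorphism of R). Let λ₀, λ₁ ∈ R. If there exists a sequence (aₙ)_{n∈ℤ} in R with aₙ → 0 p-adically as n → ±∞, not identically zero, satisfying a₂ = p, aₙ = 0 for n ≤ 1, and the recurrence φ²(aₙ₊₂) + λ₁φ(aₙ₊₁) + pλ₀aₙ = 0 for all n ≥ 2 together with a₃ = −p·φ^{−2}(λ₁), then λ₁ ∈ pR. Conversely, if λ₁ ∈ pR, then the recurrence with these initial conditions has a unique solution (aₙ) in R and satisfies a_{2k−1}, a_{2k} ∈ pᵏR for k ≥ 2, so aₙ → 0 p-adically. -/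
/-!
If `p ∤ λ₁` then `λ₁` is a unit, and the recurrence, read as
`φ²(aₙ₊₂) = -λ₁ φ(aₙ₊₁) - p λ₀ aₙ`, shows by induction that every `aₙ` with `n ≥ 2` is `p`
times a unit (a unit plus a multiple of `p` is a unit in the local ring `R`); so `p² ∤ aₙ` for all
`n ≥ 2`, contradicting `aₙ → 0`. If `p ∣ λ₁`, the same reading of the recurrence determines the
solution uniquely, and since both `λ₁` and `p λ₀` carry a factor `p`, `p^j ∣ aₙ₊₁, aₙ` gives
`p^(j+1) ∣ aₙ₊₂`; hence `p^k ∣ a_{2k-1}, a_{2k}`.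
-/

theorem Int.le_induction_two_step {P : ℤ → Prop} {m : ℤ} (h₀ : P m) (h₁ : P (m + 1))
    (step : ∀ n, m ≤ n → P n → P (n + 1) → P (n + 2)) : ∀ n, m ≤ n → P n := by
  suffices key : ∀ n, m ≤ n → P n ∧ P (n + 1) from fun n hn => (key n hn).1
  intro n hn
  induction n, hn using Int.leInduction with
  | base => exact ⟨h₀, h₁⟩
  | succ n hn ih =>
    refine ⟨ih.2, ?_⟩
    rw [add_assoc, one_add_one_eq_two]
    exact step n hn ih.1 ih.2

theorem dvd_map_iff_of_map_eq {M F : Type*} [Semigroup M] [EquivLike F M M] [MulEquivClass F M M]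
    (f : F) {x y : M} (hx : f x = x) : x ∣ f y ↔ x ∣ y := by
  conv_lhs => rw [← hx]
  exact map_dvd_iff f

theorem Irreducible.isUnit_of_not_dvd {R : Type*} [CommRing R] [IsDomain R]
    [IsDiscreteValuationRing R] {q x : R} (hq : Irreducible q) (h : ¬q ∣ x) : IsUnit x := by
  by_contra hx
  rw [← mem_nonunits_iff, ← IsLocalRing.mem_maximalIdeal, hq.maximalIdeal_eq,
    Ideal.mem_span_singleton] at hx
  exact h hx

namespace FrobeniusRecurrence

variable {R : Type*} [CommRing R]

def IsSolution (φ : R ≃+* R) (q lam0 lam1 : R) (a : ℤ → R) : Prop :=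
  a 2 = q ∧ a 3 = -(q * φ.symm (φ.symm lam1)) ∧ (∀ n : ℤ, n ≤ 1 → a n = 0) ∧
    ∀ n : ℤ, 2 ≤ n → φ (φ (a (n + 2))) + lam1 * φ (a (n + 1)) + q * lam0 * a n = 0

variable {φ : R ≃+* R} {q lam0 lam1 : R} {a : ℤ → R}

namespace IsSolution

theorem eq_symm_symm (ha : IsSolution φ q lam0 lam1 a) {n : ℤ} (hn : 2 ≤ n) :
    a (n + 2) = φ.symm (φ.symm (-(lam1 * φ (a (n + 1))) - q * lam0 * a n)) := by
  rw [φ.eq_symm_apply, φ.eq_symm_apply]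
  linear_combination ha.2.2.2 n hn

theorem eq_of_le_one (ha : IsSolution φ q lam0 lam1 a) {n : ℤ} (hn : n ≤ 1) : a n = 0 :=
  ha.2.2.1 n hn

theorem unique {b : ℤ → R} (ha : IsSolution φ q lam0 lam1 a) (hb : IsSolution φ q lam0 lam1 b) :
    a = b := by
  funext n
  rcases le_or_gt n 1 with hn | hn
  · rw [ha.eq_of_le_one hn, hb.eq_of_le_one hn]
  refine Int.le_induction_two_step (P := fun k => a k = b k) (ha.1.trans hb.1.symm)
    (ha.2.1.trans hb.2.1.symm) (fun k hk h₀ h₁ => ?_) n hn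
  rw [ha.eq_symm_symm hk, hb.eq_symm_symm hk, h₀, h₁]

theorem pow_succ_dvd_add_two (ha : IsSolution φ q lam0 lam1 a) (hq : φ q = q) (hlam1 : q ∣ lam1)
    {n : ℤ} (hn : 2 ≤ n) {j : ℕ} (h₁ : q ^ j ∣ a (n + 1)) (h₀ : q ^ j ∣ a n) :
    q ^ (j + 1) ∣ a (n + 2) := by
  have hq' : ∀ i : ℕ, φ.symm (q ^ i) = q ^ i := fun i => by
    rw [φ.symm_apply_eq, map_pow, hq]
  obtain ⟨c, rfl⟩ := hlam1
  rw [ha.eq_symm_symm hn, dvd_map_iff_of_map_eq _ (hq' _), dvd_map_iff_of_map_eq _ (hq' _),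
    pow_succ']
  refine dvd_sub (dvd_neg.2 ?_) (mul_dvd_mul (dvd_mul_right q lam0) h₀)
  rw [mul_assoc]
  exact mul_dvd_mul (dvd_refl q) (dvd_mul_of_dvd_right ((dvd_map_iff_of_map_eq φ
    (by rw [map_pow, hq])).2 h₁) c)

theorem pow_dvd (ha : IsSolution φ q lam0 lam1 a) (hq : φ q = q) (hlam1 : q ∣ lam1) {k : ℕ}
    (hk : 2 ≤ k) : q ^ k ∣ a (2 * k - 1) ∧ q ^ k ∣ a (2 * k) := by
  induction k, hk using Nat.le_induction with
  | base =>
    have h₃ : q ^ 2 ∣ a 3 := by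
      obtain ⟨c, rfl⟩ := hlam1
      rw [ha.2.1, map_mul, map_mul, φ.symm_apply_eq.2 hq.symm, φ.symm_apply_eq.2 hq.symm]
      exact ⟨-φ.symm (φ.symm c), by ring⟩
    have h₄ := ha.pow_succ_dvd_add_two hq hlam1 (n := 2) le_rfl (j := 1)
      (by rw [pow_one]; exact (dvd_pow_self q two_ne_zero).trans h₃) (by rw [ha.1, pow_one])
    exact ⟨h₃, h₄⟩
  | succ k hk ih =>
    have h₁ : q ^ (k + 1) ∣ a (2 * k + 1) := by
      convert ha.pow_succ_dvd_add_two hq hlam1 (n := 2 * k - 1) (by omega)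
        (by rw [sub_add_cancel]; exact ih.2) ih.1 using 2
      ring
    have h₂ := ha.pow_succ_dvd_add_two hq hlam1 (n := 2 * k) (by omega)
      ((pow_dvd_pow q k.le_succ).trans h₁) ih.2
    push_cast
    constructor
    · convert h₁ using 2; ring
    · convert h₂ using 2; ring

theorem exists_pow_dvd_of_le_abs (ha : IsSolution φ q lam0 lam1 a) (hq : φ q = q)
    (hlam1 : q ∣ lam1) (k : ℕ) : ∃ N : ℕ, ∀ n : ℤ, (N : ℤ) ≤ |n| → q ^ k ∣ a n := by
  refine ⟨2 * k + 4, fun n hn => ?_⟩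
  rcases le_or_gt n 1 with h | h
  · rw [ha.eq_of_le_one h]
    exact dvd_zero _
  rw [abs_of_pos (by omega)] at hn
  obtain ⟨m, hm, hkm, rfl | rfl⟩ : ∃ m : ℕ, 2 ≤ m ∧ k ≤ m ∧ (n = 2 * m - 1 ∨ n = 2 * m) :=
    ⟨((n + 1) / 2).toNat, by omega, by omega, by omega⟩
  · exact (pow_dvd_pow q hkm).trans (ha.pow_dvd hq hlam1 hm).1
  · exact (pow_dvd_pow q hkm).trans (ha.pow_dvd hq hlam1 hm).2

theorem exists_isUnit_mul [IsLocalRing R] (ha : IsSolution φ q lam0 lam1 a) (hq : φ q = q)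
    (hq' : ¬IsUnit q) (hlam1 : IsUnit lam1) : ∀ n, 2 ≤ n → ∃ u, IsUnit u ∧ a n = q * u := by
  refine Int.le_induction_two_step ⟨1, isUnit_one, by rw [ha.1, mul_one]⟩
    ⟨-φ.symm (φ.symm lam1), ((hlam1.map _).map _).neg, by show a 3 = _; rw [ha.2.1]; ring⟩ ?_
  rintro n hn ⟨u, -, hu⟩ ⟨v, hv, hv'⟩
  set w := -(lam1 * φ v) - q * lam0 * u
  have hw : IsUnit w := by
    have : IsUnit (w + q * lam0 * u) := by
      rw [sub_add_cancel]
      exact (hlam1.mul (hv.map φ)).neg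
    exact (IsLocalRing.isUnit_or_isUnit_of_isUnit_add this).resolve_right
      fun h => hq' (isUnit_of_mul_isUnit_left (isUnit_of_mul_isUnit_left h))
  refine ⟨φ.symm (φ.symm w), (hw.map _).map _, ?_⟩
  rw [ha.eq_symm_symm hn, hu, hv', map_mul φ, hq,
    show -(lam1 * (q * φ v)) - q * lam0 * (q * u) = q * w by ring,
    map_mul, map_mul, φ.symm_apply_eq.2 hq.symm, φ.symm_apply_eq.2 hq.symm]

theorem not_sq_dvd [IsDomain R] [IsLocalRing R] (ha : IsSolution φ q lam0 lam1 a)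
    (hq : φ q = q) (hq₀ : q ≠ 0) (hq' : ¬IsUnit q) (hlam1 : IsUnit lam1) {n : ℤ} (hn : 2 ≤ n) :
    ¬q ^ 2 ∣ a n := by
  obtain ⟨u, hu, hau⟩ := ha.exists_isUnit_mul hq hq' hlam1 n hn
  rw [hau, sq, mul_dvd_mul_iff_left hq₀]
  exact fun h => hq' (isUnit_of_dvd_unit h hu)

end IsSolution

variable (φ q lam0 lam1)

noncomputable def natSolution : ℕ → R
  | 0 => q
  | 1 => -(q * φ.symm (φ.symm lam1))
  | n + 2 => φ.symm (φ.symm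
      (-(lam1 * φ (natSolution (n + 1))) - q * lam0 * natSolution n))

noncomputable def solution (n : ℤ) : R :=
  if n ≤ 1 then 0 else natSolution φ q lam0 lam1 (n - 2).toNat

theorem solution_natCast_add_two (m : ℕ) :
    solution φ q lam0 lam1 (m + 2) = natSolution φ q lam0 lam1 m := by
  simp [solution, show ¬(m : ℤ) + 2 ≤ 1 by omega]

theorem isSolution_solution : IsSolution φ q lam0 lam1 (solution φ q lam0 lam1) := by
  refine ⟨solution_natCast_add_two φ q lam0 lam1 0, solution_natCast_add_two φ q lam0 lam1 1,
    fun n hn => if_pos hn, fun n hn => ?_⟩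
  obtain ⟨m, rfl⟩ : ∃ m : ℕ, n = m + 2 := ⟨(n - 2).toNat, by omega⟩
  rw [show (m : ℤ) + 2 + 2 = ((m + 2 : ℕ) : ℤ) + 2 by push_cast; ring,
    show (m : ℤ) + 2 + 1 = ((m + 1 : ℕ) : ℤ) + 2 by push_cast; ring,
    solution_natCast_add_two, solution_natCast_add_two, solution_natCast_add_two,
    natSolution.eq_3, φ.apply_symm_apply, φ.apply_symm_apply]
  ring

end FrobeniusRecurrence

open FrobeniusRecurrence

theorem stmt_9_general (p : ℕ)
    (R : Type*) [CommRing R] [IsDomain R] [IsDiscreteValuationRing R]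
    (hirr : Irreducible (p : R))
    (φ : R ≃+* R)
    (lam0 lam1 : R) :
    ((∃ a : ℤ → R,
        (∀ k : ℕ, ∃ N : ℕ, ∀ n : ℤ, (N : ℤ) ≤ |n| → ∃ r : R, a n = (p : R) ^ k * r) ∧
        (∃ n, a n ≠ 0) ∧
        a 2 = (p : R) ∧
        a 3 = -((p : R) * φ.symm (φ.symm lam1)) ∧
        (∀ n : ℤ, n ≤ 1 → a n = 0) ∧
        (∀ n : ℤ, 2 ≤ n →
          φ (φ (a (n + 2))) + lam1 * φ (a (n + 1)) + (p : R) * lam0 * a n = 0)) →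
      ∃ c : R, lam1 = (p : R) * c) ∧
    ((∃ c : R, lam1 = (p : R) * c) →
      (∃! a : ℤ → R,
        a 2 = (p : R) ∧
        a 3 = -((p : R) * φ.symm (φ.symm lam1)) ∧
        (∀ n : ℤ, n ≤ 1 → a n = 0) ∧
        (∀ n : ℤ, 2 ≤ n →
          φ (φ (a (n + 2))) + lam1 * φ (a (n + 1)) + (p : R) * lam0 * a n = 0)) ∧
      (∀ a : ℤ → R,
        (a 2 = (p : R) ∧
          a 3 = -((p : R) * φ.symm (φ.symm lam1)) ∧
          (∀ n : ℤ, n ≤ 1 → a n = 0) ∧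
          (∀ n : ℤ, 2 ≤ n →
            φ (φ (a (n + 2))) + lam1 * φ (a (n + 1)) + (p : R) * lam0 * a n = 0)) →
        (∀ k : ℕ, 2 ≤ k →
          (∃ r : R, a (2 * k - 1) = (p : R) ^ k * r) ∧
          (∃ r : R, a (2 * k) = (p : R) ^ k * r)) ∧
        (∀ k : ℕ, ∃ N : ℕ, ∀ n : ℤ, (N : ℤ) ≤ |n| → ∃ r : R, a n = (p : R) ^ k * r))) := by
  have hφp : φ p = p := map_natCast φ p
  constructor
  · rintro ⟨a, hdecay, -, ha⟩
    by_contra hlam1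
    obtain ⟨N, hN⟩ := hdecay 2
    exact IsSolution.not_sq_dvd ha hφp hirr.ne_zero hirr.not_isUnit
      (hirr.isUnit_of_not_dvd hlam1) (n := N + 2) (by omega)
      (hN _ (by rw [abs_of_nonneg (by omega)]; omega))
  · intro hlam1
    have hsol := isSolution_solution φ p lam0 lam1
    exact ⟨⟨_, hsol, fun b hb => IsSolution.unique hb hsol⟩, fun a ha =>
      ⟨fun k hk => IsSolution.pow_dvd ha hφp hlam1 hk,
        IsSolution.exists_pow_dvd_of_le_abs ha hφp hlam1⟩⟩

/-- Let `R` be a complete DVR with maximal ideal `(p)` and algebraically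
closed residue field, with its unique Frobenius lift `φ` (an automorphism).  For
`λ₀ λ₁ ∈ R`: if there is a not-identically-zero sequence `(aₙ)` in `R` tending to `0`
p-adically at `±∞` with `a₂ = p`, `a₃ = -p·φ⁻²(λ₁)`, `aₙ = 0` for `n ≤ 1` and
`φ²(a_{n+2}) + λ₁ φ(a_{n+1}) + p λ₀ aₙ = 0` for `n ≥ 2`, then `λ₁ ∈ pR`.
Conversely, if `λ₁ ∈ pR` then there is a unique sequence satisfying these initial
conditions and recurrence, and it satisfies `a_{2k-1}, a_{2k} ∈ pᵏR` for `k ≥ 2`,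
hence tends to `0` p-adically. -/
theorem stmt_9 (p : ℕ) (hp : p.Prime) (hodd : p ≠ 2)
    (R : Type*) [CommRing R] [IsDomain R] [IsDiscreteValuationRing R]
    (hirr : Irreducible (p : R)) (hcompl : IsAdicComplete (Ideal.span {(p : R)}) R)
    [IsAlgClosed (IsLocalRing.ResidueField R)]
    (φ : R ≃+* R) (hφ : ∀ x : R, ∃ c : R, φ x = x ^ p + (p : R) * c)
    (lam0 lam1 : R) :
    ((∃ a : ℤ → R,
        (∀ k : ℕ, ∃ N : ℕ, ∀ n : ℤ, (N : ℤ) ≤ |n| → ∃ r : R, a n = (p : R) ^ k * r) ∧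
        (∃ n, a n ≠ 0) ∧
        a 2 = (p : R) ∧
        a 3 = -((p : R) * φ.symm (φ.symm lam1)) ∧
        (∀ n : ℤ, n ≤ 1 → a n = 0) ∧
        (∀ n : ℤ, 2 ≤ n →
          φ (φ (a (n + 2))) + lam1 * φ (a (n + 1)) + (p : R) * lam0 * a n = 0)) →
      ∃ c : R, lam1 = (p : R) * c) ∧
    ((∃ c : R, lam1 = (p : R) * c) →
      (∃! a : ℤ → R,
        a 2 = (p : R) ∧
        a 3 = -((p : R) * φ.symm (φ.symm lam1)) ∧
        (∀ n : ℤ, n ≤ 1 → a n = 0) ∧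
        (∀ n : ℤ, 2 ≤ n →
          φ (φ (a (n + 2))) + lam1 * φ (a (n + 1)) + (p : R) * lam0 * a n = 0)) ∧
      (∀ a : ℤ → R,
        (a 2 = (p : R) ∧
          a 3 = -((p : R) * φ.symm (φ.symm lam1)) ∧
          (∀ n : ℤ, n ≤ 1 → a n = 0) ∧
          (∀ n : ℤ, 2 ≤ n →
            φ (φ (a (n + 2))) + lam1 * φ (a (n + 1)) + (p : R) * lam0 * a n = 0)) →
        (∀ k : ℕ, 2 ≤ k →
          (∃ r : R, a (2 * k - 1) = (p : R) ^ k * r) ∧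
          (∃ r : R, a (2 * k) = (p : R) ^ k * r)) ∧
        (∀ k : ℕ, ∃ N : ℕ, ∀ n : ℤ, (N : ℤ) ≤ |n| → ∃ r : R, a n = (p : R) ^ k * r))) :=
  stmt_9_general p R hirr φ lam0 lam1
end
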